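/- arXiv:2012.10679 — 3 statements merged into one kernel-verified Lean document; each statement's English description precedes it below -/
import Mathlib

section
/- Let L be a positive integer, F an L×L complex matrix, J an L×L Hermitian positive definite complex matrix, and W an L×L Hermitian positive semidefinite complex matrix. Define E(G) = I_L − Gᴴ F − Fᴴ G + Gᴴ J G and G* = J⁻¹ F. Then for every L×L complex matrix G, the real part of tr(W · E(G)) is at least the real part of tr(W · E(G*)); i.e., the MMSE receive filter G* = J⁻¹F minimizes the weighted mean square error tr(W E(G)) over all receive filters G, for any positive semidefinite weight matrix W. -/
/-!
Completing the square: as `J G* = F` and `J` is Hermitian,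
`E(G) = E(G*) + (G - G*)ᴴ J (G - G*)`. The correction term is positive semidefinite, and the
trace of a product of two positive semidefinite matrices is a nonnegative real (write `W = Cᴴ C`
and cycle the trace), so `tr (W E(G)) - tr (W E(G*)) ≥ 0`.
-/

open Matrix ComplexOrder

namespace Matrix

variable {m n R 𝕜 : Type*} [Fintype m]

theorem PosSemidef.trace_mul_nonneg [Fintype n] [RCLike 𝕜] {A B : Matrix n n 𝕜}
    (hA : A.PosSemidef) (hB : B.PosSemidef) : 0 ≤ (A * B).trace := by
  classical
  open MatrixOrder in
  obtain ⟨C, rfl⟩ := CStarAlgebra.nonneg_iff_eq_star_mul_self.mp hA.nonneg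
  rw [star_eq_conjTranspose, Matrix.mul_assoc, trace_mul_comm]
  exact (hB.mul_mul_conjTranspose_same C).trace_nonneg

def mseMatrix [DecidableEq n] [Ring R] [StarRing R]
    (F : Matrix m n R) (J : Matrix m m R) (G : Matrix m n R) : Matrix n n R :=
  1 - Gᴴ * F - Fᴴ * G + Gᴴ * J * G

theorem mseMatrix_eq_add_of_mul_eq [DecidableEq n] [Ring R] [StarRing R]
    {F G₀ : Matrix m n R} {J : Matrix m m R} (hJ : J.IsHermitian) (hG₀ : J * G₀ = F)
    (G : Matrix m n R) :
    mseMatrix F J G = mseMatrix F J G₀ + (G - G₀)ᴴ * J * (G - G₀) := by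
  subst hG₀
  simp only [mseMatrix, conjTranspose_mul, hJ.eq, conjTranspose_sub, Matrix.sub_mul,
    Matrix.mul_sub, Matrix.mul_assoc]
  abel

theorem trace_mul_mseMatrix_le [Fintype n] [DecidableEq n] [RCLike 𝕜] {F G₀ : Matrix m n 𝕜}
    {J : Matrix m m 𝕜} {W : Matrix n n 𝕜} (hJ : J.PosSemidef) (hW : W.PosSemidef)
    (hG₀ : J * G₀ = F) (G : Matrix m n 𝕜) :
    (W * mseMatrix F J G₀).trace ≤ (W * mseMatrix F J G).trace := by
  rw [mseMatrix_eq_add_of_mul_eq hJ.isHermitian hG₀ G, Matrix.mul_add, trace_add,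
    le_add_iff_nonneg_right]
  exact hW.trace_mul_nonneg (hJ.conjTranspose_mul_mul_same _)

end Matrix

theorem mmse_filter_minimizes_weighted_mse_general
    (L : ℕ)
    (F J W : Matrix (Fin L) (Fin L) ℂ) (hJ : J.PosDef) (hW : W.PosSemidef)
    (E : Matrix (Fin L) (Fin L) ℂ → Matrix (Fin L) (Fin L) ℂ)
    (hE : ∀ G, E G = 1 - Gᴴ * F - Fᴴ * G + Gᴴ * J * G)
    (Gstar : Matrix (Fin L) (Fin L) ℂ) (hGstar : Gstar = J⁻¹ * F) :
    ∀ G : Matrix (Fin L) (Fin L) ℂ,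
      ((W * E Gstar).trace).re ≤ ((W * E G).trace).re := by
  intro G
  have hJGstar : J * Gstar = F := by
    rw [hGstar, mul_nonsing_inv_cancel_left _ _ ((isUnit_iff_isUnit_det J).mp hJ.isUnit)]
  rw [show E = mseMatrix F J from funext hE]
  exact (Complex.le_def.mp (trace_mul_mseMatrix_le hJ.posSemidef hW hJGstar G)).1

/-- For the MSE matrix `E(G) = I - Gᴴ F - Fᴴ G + Gᴴ J G` with `J`
Hermitian positive definite, the MMSE filter `G* = J⁻¹ F` minimizes the weighted
mean square error `Re (tr (W * E(G)))` over all `G`, for any Hermitian positive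
semidefinite weight matrix `W`. -/
theorem mmse_filter_minimizes_weighted_mse
    (L : ℕ) (hL : 0 < L)
    (F J W : Matrix (Fin L) (Fin L) ℂ) (hJ : J.PosDef) (hW : W.PosSemidef)
    (E : Matrix (Fin L) (Fin L) ℂ → Matrix (Fin L) (Fin L) ℂ)
    (hE : ∀ G, E G = 1 - Gᴴ * F - Fᴴ * G + Gᴴ * J * G)
    (Gstar : Matrix (Fin L) (Fin L) ℂ) (hGstar : Gstar = J⁻¹ * F) :
    ∀ G : Matrix (Fin L) (Fin L) ℂ,
      ((W * E Gstar).trace).re ≤ ((W * E G).trace).re :=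
  mmse_filter_minimizes_weighted_mse_general L F J W hJ hW E hE Gstar hGstar
end

section
/- Let n be a positive integer and A an n×n Hermitian positive definite complex matrix. Then (tr A).re − log((det A).re) ≥ n, with equality if and only if A = I_n. (Here tr A and det A are real numbers since A is Hermitian positive definite, so the real parts equal the trace and determinant themselves.) -/
/-! Writing `λᵢ > 0` for the eigenvalues of `A`, the left-hand side is `∑ᵢ (λᵢ - log λᵢ)`, and
`x - log x ≥ 1` for `x > 0` with equality only at `x = 1` (this is `log x ≤ x - 1`). So the sum is
at least `n`, with equality iff every eigenvalue is `1`, i.e. iff `A = 1` by the spectral theorem. -/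

open Matrix ComplexOrder

namespace Real

theorem one_le_sub_log {x : ℝ} (hx : 0 < x) : 1 ≤ x - log x := by
  linarith [log_le_sub_one_of_pos hx]

theorem sub_log_eq_one_iff {x : ℝ} (hx : 0 < x) : x - log x = 1 ↔ x = 1 := by
  refine ⟨fun h => by_contra fun hne => ?_, fun h => by simp [h]⟩
  linarith [log_lt_sub_one_of_pos hx hne]

end Real

namespace Matrix

variable {ι 𝕜 : Type*} [Fintype ι] [DecidableEq ι] [RCLike 𝕜] {A : Matrix ι ι 𝕜}

theorem IsHermitian.eq_one_of_eigenvalues_eq_one (hA : A.IsHermitian)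
    (h : ∀ i, hA.eigenvalues i = 1) : A = 1 := by
  have hdiag : diagonal (RCLike.ofReal ∘ hA.eigenvalues) = (1 : Matrix ι ι 𝕜) := by
    simp [Function.comp_def, h]
  rw [hA.spectral_theorem, hdiag, map_one]

theorem PosDef.re_trace_sub_log_re_det (hA : A.PosDef) :
    RCLike.re A.trace - Real.log (RCLike.re A.det) =
      ∑ i, (hA.isHermitian.eigenvalues i - Real.log (hA.isHermitian.eigenvalues i)) := by
  have htrace : RCLike.re A.trace = ∑ i, hA.isHermitian.eigenvalues i := by
    simp [hA.isHermitian.trace_eq_sum_eigenvalues]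
  have hdet : RCLike.re A.det = ∏ i, hA.isHermitian.eigenvalues i := by
    rw [hA.isHermitian.det_eq_prod_eigenvalues, ← RCLike.ofReal_prod, RCLike.ofReal_re]
  rw [htrace, hdet, Real.log_prod fun i _ => (hA.eigenvalues_pos i).ne', Finset.sum_sub_distrib]

theorem PosDef.card_le_re_trace_sub_log_re_det (hA : A.PosDef) :
    (Fintype.card ι : ℝ) ≤ RCLike.re A.trace - Real.log (RCLike.re A.det) := by
  rw [hA.re_trace_sub_log_re_det, Fintype.card_eq_sum_ones, Nat.cast_sum, Nat.cast_one]
  exact Finset.sum_le_sum fun i _ => Real.one_le_sub_log (hA.eigenvalues_pos i)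

theorem PosDef.re_trace_sub_log_re_det_eq_card_iff (hA : A.PosDef) :
    RCLike.re A.trace - Real.log (RCLike.re A.det) = Fintype.card ι ↔ A = 1 := by
  refine ⟨fun h => hA.isHermitian.eq_one_of_eigenvalues_eq_one fun i => ?_, ?_⟩
  · have hle : ∀ i ∈ Finset.univ, (1 : ℝ) ≤
        hA.isHermitian.eigenvalues i - Real.log (hA.isHermitian.eigenvalues i) :=
      fun i _ => Real.one_le_sub_log (hA.eigenvalues_pos i)
    rw [hA.re_trace_sub_log_re_det, Fintype.card_eq_sum_ones, Nat.cast_sum, Nat.cast_one,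
      eq_comm, Finset.sum_eq_sum_iff_of_le hle] at h
    exact (Real.sub_log_eq_one_iff (hA.eigenvalues_pos i)).mp (h i (Finset.mem_univ i)).symm
  · rintro rfl
    simp

end Matrix

theorem trace_sub_log_det_ge_general
    (n : ℕ)
    (A : Matrix (Fin n) (Fin n) ℂ) (hA : A.PosDef) :
    (n : ℝ) ≤ (A.trace).re - Real.log ((A.det).re) ∧
    ((A.trace).re - Real.log ((A.det).re) = n ↔ A = 1) := by
  have hle := hA.card_le_re_trace_sub_log_re_det
  have heq := hA.re_trace_sub_log_re_det_eq_card_iff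
  simp only [Fintype.card_fin, RCLike.re_to_complex] at hle heq
  exact ⟨hle, heq⟩

/-- For an `n × n` Hermitian positive definite complex matrix `A`,
`Re (tr A) - log (Re (det A)) ≥ n`, with equality iff `A = I`. -/
theorem trace_sub_log_det_ge
    (n : ℕ) (hn : 0 < n)
    (A : Matrix (Fin n) (Fin n) ℂ) (hA : A.PosDef) :
    (n : ℝ) ≤ (A.trace).re - Real.log ((A.det).re) ∧
    ((A.trace).re - Real.log ((A.det).re) = n ↔ A = 1) :=
  trace_sub_log_det_ge_general n A hA
end

section
/- Let n and L be positive integers and let E : ℝⁿ → Mat_{L×L}(ℂ) be a map that is Fréchet differentiable at a point x̂ ∈ ℝⁿ, such that E(x) is Hermitian for every x and E(x̂) is Hermitian positive definite. Then the real-valued functions f(x) = (tr(E(x̂)⁻¹ · E(x))).re and g(x) = log((det E(x)).re) are both differentiable at x̂ and have the same Fréchet derivative at x̂: fderiv f(x̂) = fderiv g(x̂). -/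
open Matrix ComplexOrder

attribute [local instance] Matrix.normedAddCommGroup Matrix.normedSpace

/-! Jacobi's formula: the determinant is multilinear in the rows, so its derivative at `A` is
`H ↦ ∑ᵢ det (A with row i replaced by Hᵢ) = tr (adj A · H)`, which for invertible `A` equals
`det A · tr (A⁻¹ H)`. At a positive definite `A = E x̂` the determinant is a positive real, so
the chain rule through `log ∘ re` cancels the factor `det A` and leaves `re tr (A⁻¹ E'(x̂) ·)`,
the derivative of the real-linear function `M ↦ re tr (A⁻¹ M)` composed with `E`. -/

namespace Matrix

variable {n R : Type*} [Fintype n]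

section CommRing

variable [DecidableEq n] [CommRing R]

theorem det_updateRow_eq_sum_adjugate_mul (A : Matrix n n R) (i : n) (b : n → R) :
    (A.updateRow i b).det = ∑ j, A.adjugate j i * b j := by
  rw [← det_transpose, ← updateCol_transpose, ← cramer_apply, cramer_eq_adjugate_mulVec,
    ← adjugate_transpose]
  simp [mulVec, dotProduct]

theorem sum_det_updateRow_eq_trace_adjugate_mul (A H : Matrix n n R) :
    ∑ i, (A.updateRow i (H i)).det = (A.adjugate * H).trace := by
  simp only [det_updateRow_eq_sum_adjugate_mul, trace, diag, mul_apply]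
  exact Finset.sum_comm

theorem trace_adjugate_mul_of_isUnit_det {A : Matrix n n R} (h : IsUnit A.det)
    (H : Matrix n n R) : (A.adjugate * H).trace = A.det * (A⁻¹ * H).trace := by
  rw [inv_def, smul_mul, trace_smul, smul_eq_mul, ← mul_assoc, Ring.mul_inverse_cancel _ h,
    one_mul]

end CommRing

variable (𝕜 : Type*) [NontriviallyNormedField 𝕜] [NormedCommRing R] [NormedAlgebra 𝕜 R]

def traceMulLeftCLM (B : Matrix n n R) : Matrix n n R →L[𝕜] R where
  toFun H := (B * H).trace
  map_add' H K := by rw [Matrix.mul_add, trace_add]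
  map_smul' c H := by rw [Matrix.mul_smul, trace_smul, RingHom.id_apply]
  cont := by fun_prop

@[simp]
theorem traceMulLeftCLM_apply (B H : Matrix n n R) : traceMulLeftCLM 𝕜 B H = (B * H).trace :=
  rfl

variable [DecidableEq n]

def detRowContinuousMultilinearMap : ContinuousMultilinearMap 𝕜 (fun _ : n ↦ n → R) R where
  toMultilinearMap := (detRowAlternating (n := n) (R := R)).toMultilinearMap.restrictScalars 𝕜
  cont := continuous_id.matrix_det

theorem hasFDerivAt_det (A : Matrix n n R) :
    HasFDerivAt det (traceMulLeftCLM 𝕜 A.adjugate) A := by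
  refine (detRowContinuousMultilinearMap 𝕜).hasFDerivAt A |>.congr_fderiv ?_
  ext H
  exact ((detRowContinuousMultilinearMap 𝕜).linearDeriv_apply A H).trans
    (sum_det_updateRow_eq_trace_adjugate_mul A H)

end Matrix

theorem HasFDerivAt.log_re_det {F n : Type*} [NormedAddCommGroup F] [NormedSpace ℝ F]
    [Fintype n] [DecidableEq n] {E : F → Matrix n n ℂ} {E' : F →L[ℝ] Matrix n n ℂ} {x : F}
    (hE : HasFDerivAt E E' x) (hdet : 0 < (E x).det) :
    HasFDerivAt (fun y ↦ Real.log (E y).det.re)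
      (Complex.reCLM ∘L traceMulLeftCLM ℝ (E x)⁻¹ ∘L E') x := by
  obtain ⟨hre, him⟩ := Complex.pos_iff.mp hdet
  have hlog := (Complex.reCLM.hasFDerivAt.comp x ((hasFDerivAt_det ℝ (E x)).comp x hE)).log
    hre.ne'
  refine hlog.congr_fderiv (ContinuousLinearMap.ext fun v ↦ ?_)
  change ((E x).det.re)⁻¹ * ((E x).adjugate * E' v).trace.re = ((E x)⁻¹ * E' v).trace.re
  have hdet_real : (E x).det = ((E x).det.re : ℂ) := Complex.ext rfl him.symm
  rw [trace_adjugate_mul_of_isUnit_det hdet.ne'.isUnit, hdet_real, Complex.re_ofReal_mul,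
    Complex.ofReal_re, inv_mul_cancel_left₀ hre.ne']

theorem gradient_matching_trace_logdet_general
    (n L : ℕ)
    (E : (Fin n → ℝ) → Matrix (Fin L) (Fin L) ℂ)
    (xhat : Fin n → ℝ)
    (hdiff : DifferentiableAt ℝ E xhat)
    (hpos : (E xhat).PosDef)
    (f g : (Fin n → ℝ) → ℝ)
    (hf : ∀ x, f x = (((E xhat)⁻¹ * E x).trace).re)
    (hg : ∀ x, g x = Real.log (((E x).det).re)) :
    DifferentiableAt ℝ f xhat ∧ DifferentiableAt ℝ g xhat ∧
      fderiv ℝ f xhat = fderiv ℝ g xhat := by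
  have hf' : HasFDerivAt f
      (Complex.reCLM ∘L traceMulLeftCLM ℝ (E xhat)⁻¹ ∘L fderiv ℝ E xhat) xhat := by
    rw [funext hf]
    exact (Complex.reCLM ∘L traceMulLeftCLM ℝ (E xhat)⁻¹).hasFDerivAt.comp xhat
      hdiff.hasFDerivAt
  have hg' : HasFDerivAt g
      (Complex.reCLM ∘L traceMulLeftCLM ℝ (E xhat)⁻¹ ∘L fderiv ℝ E xhat) xhat := by
    rw [funext hg]
    exact hdiff.hasFDerivAt.log_re_det hpos.det_pos
  exact ⟨hf'.differentiableAt, hg'.differentiableAt, hf'.fderiv.trans hg'.fderiv.symm⟩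

/-- If `E : ℝⁿ → Mat_{L×L}(ℂ)` is Fréchet differentiable at `x̂`,
takes Hermitian values, and `E(x̂)` is Hermitian positive definite, then the
functions `f(x) = Re (tr (E(x̂)⁻¹ E(x)))` and `g(x) = log (Re (det E(x)))` are
differentiable at `x̂` with the same Fréchet derivative there. -/
theorem gradient_matching_trace_logdet
    (n L : ℕ) (hn : 0 < n) (hL : 0 < L)
    (E : (Fin n → ℝ) → Matrix (Fin L) (Fin L) ℂ)
    (xhat : Fin n → ℝ)
    (hdiff : DifferentiableAt ℝ E xhat)
    (hherm : ∀ x, (E x).IsHermitian)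
    (hpos : (E xhat).PosDef)
    (f g : (Fin n → ℝ) → ℝ)
    (hf : ∀ x, f x = (((E xhat)⁻¹ * E x).trace).re)
    (hg : ∀ x, g x = Real.log (((E x).det).re)) :
    DifferentiableAt ℝ f xhat ∧ DifferentiableAt ℝ g xhat ∧
      fderiv ℝ f xhat = fderiv ℝ g xhat :=
  gradient_matching_trace_logdet_general n L E xhat hdiff hpos f g hf hg
end
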